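/- arXiv:2210.16913 — 4 statements merged into one kernel-verified Lean document; each statement's English description precedes it below -/
import Mathlib

section
/- Define L_t for t ≥ 2 as the largest integer B such that t ≥ (B−1)·2^{B−1}. Then for all t ≥ 2, L_t > 0.63·log₂(1 + ln(2)·t). -/
/-!
Since `L + 1` is not admissible, `t < L * 2 ^ L`, and `1 + n * 2 ^ n ≤ 3 ^ n` for all `n`, so
`1 + log 2 * t < 3 ^ L` and `log₂ (1 + log 2 * t) < L * log₂ 3`. The constant works because
`0.63 * log₂ 3 ≤ 1`, which is `3 ^ 63 ≤ 2 ^ 100`.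
-/

open Real

theorem one_add_mul_two_pow_le_three_pow (n : ℕ) : 1 + n * 2 ^ n ≤ 3 ^ n := by
  induction n with
  | zero => simp
  | succ n ih =>
    rcases lt_or_ge n 2 with hn | hn
    · interval_cases n <;> simp
    · have : 2 * 2 ^ n ≤ n * 2 ^ n := Nat.mul_le_mul_right _ hn
      rw [pow_succ, pow_succ]
      nlinarith

theorem lt_mul_two_pow_of_isGreatest {t : ℝ} {L : ℕ}
    (hL : IsGreatest {B : ℕ | ((B : ℝ) - 1) * (2 : ℝ) ^ ((B : ℤ) - 1) ≤ t} L) :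
    t < L * 2 ^ L := by
  have hsucc : L + 1 ∉ {B : ℕ | ((B : ℝ) - 1) * (2 : ℝ) ^ ((B : ℤ) - 1) ≤ t} :=
    fun h => (L.lt_succ_self).not_ge (hL.2 h)
  simpa [not_le] using hsucc

theorem logb_two_three_le : logb 2 3 ≤ 100 / 63 := by
  rw [logb, div_le_div_iff₀ (log_pos one_lt_two) (by norm_num)]
  have h : log ((3 : ℝ) ^ 63) ≤ log ((2 : ℝ) ^ 100) := log_le_log (by norm_num) (by norm_num)
  rw [log_pow, log_pow] at h
  push_cast at h
  linarith

theorem num_brackets_lower_bound_general (t L : ℕ)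
    (hL : IsGreatest {B : ℕ | ((B : ℝ) - 1) * (2 : ℝ) ^ ((B : ℤ) - 1) ≤ t} L) :
    (L : ℝ) > 0.63 * Real.logb 2 (1 + Real.log 2 * t) := by
  have hlt : (t : ℝ) < L * 2 ^ L := lt_mul_two_pow_of_isGreatest hL
  have hlog2 : 0 < log 2 := log_pos one_lt_two
  have hlt3 : 1 + log 2 * t < 3 ^ L := by
    calc 1 + log 2 * t < 1 + log 2 * (L * 2 ^ L) := by gcongr
      _ ≤ 1 + L * 2 ^ L := by
        have h : log 2 * (L * 2 ^ L) ≤ (L * 2 ^ L : ℝ) :=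
          mul_le_of_le_one_left (by positivity) (by linarith [log_two_lt_d9])
        linarith
      _ ≤ 3 ^ L := by exact_mod_cast one_add_mul_two_pow_le_three_pow L
  have hlogb : logb 2 (1 + log 2 * t) < L * logb 2 3 := by
    rw [← logb_pow]
    exact logb_lt_logb one_lt_two (by positivity) hlt3
  calc 0.63 * logb 2 (1 + log 2 * t) < 0.63 * (L * logb 2 3) := by gcongr
    _ ≤ L := by nlinarith [logb_two_three_le, L.cast_nonneg (α := ℝ)]

theorem num_brackets_lower_bound (t L : ℕ) (ht : 2 ≤ t)
    (hL : IsGreatest {B : ℕ | ((B : ℝ) - 1) * (2 : ℝ) ^ ((B : ℤ) - 1) ≤ t} L) :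
    (L : ℝ) > 0.63 * Real.logb 2 (1 + Real.log 2 * t) :=
  num_brackets_lower_bound_general t L hL
end

section
/- For any real X ≥ 0, the unique nonnegative solution of X·exp(X) = z (i.e., X = W(z), the principal branch of the Lambert W function) satisfies 0.6321·ln(1 + z) ≤ W(z) ≤ ln(1 + z) for all z ≥ 0. -/
/-!
Writing `z = X e^X`, the upper bound is `e^X ≤ 1 + X e^X`, i.e. `1 - X ≤ e^{-X}`.
For the lower bound, `1 + X ≤ e^X` gives `(1 + X)(1 + X e^X) ≤ e^X (1 + X + X²)`, and
`1 + X + X² ≤ (1 + X) e^{bX}` with `b = 1/0.6321 - 1` follows from the quadratic Taylor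
bound for `e^{bX}`; together `1 + z ≤ e^{X / 0.6321}`.
-/

open Real

lemma exp_le_one_add_mul_exp (x : ℝ) : exp x ≤ 1 + x * exp x := by
  have hinv : exp x * exp (-x) = 1 := by rw [← exp_add, add_neg_cancel, exp_zero]
  calc exp x = exp x * (1 - x) + x * exp x := by ring
    _ ≤ exp x * exp (-x) + x * exp x := by
        gcongr; linarith [add_one_le_exp (-x)]
    _ = 1 + x * exp x := by rw [hinv]

lemma one_add_mul_one_add_mul_exp_le (x : ℝ) :
    (1 + x) * (1 + x * exp x) ≤ exp x * (1 + x + x ^ 2) := by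
  linear_combination add_one_le_exp x

lemma one_add_add_sq_le_mul_exp {x : ℝ} (hx : 0 ≤ x) :
    1 + x + x ^ 2 ≤ (1 + x) * exp (3679 / 6321 * x) := by
  have hTaylor := quadratic_le_exp_of_nonneg (by positivity : 0 ≤ 3679 / 6321 * x)
  calc 1 + x + x ^ 2
      ≤ (1 + x) * (1 + 3679 / 6321 * x + (3679 / 6321 * x) ^ 2 / 2) := by
        nlinarith [mul_nonneg hx (sq_nonneg (x - 3 / 4))]
    _ ≤ (1 + x) * exp (3679 / 6321 * x) := by gcongr

lemma one_add_mul_exp_le_exp_div {x : ℝ} (hx : 0 ≤ x) :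
    1 + x * exp x ≤ exp (x / 0.6321) := by
  have hsplit : x / 0.6321 = x + 3679 / 6321 * x := by norm_num; ring
  rw [hsplit, exp_add]
  refine le_of_mul_le_mul_left ?_ (by linarith : 0 < 1 + x)
  calc (1 + x) * (1 + x * exp x) ≤ exp x * (1 + x + x ^ 2) :=
        one_add_mul_one_add_mul_exp_le x
    _ ≤ exp x * ((1 + x) * exp (3679 / 6321 * x)) := by
        gcongr; exact one_add_add_sq_le_mul_exp hx
    _ = (1 + x) * (exp x * exp (3679 / 6321 * x)) := by ring

theorem lambertW_bounds_general (z X : ℝ) (hX : 0 ≤ X)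
    (hW : X * Real.exp X = z) :
    0.6321 * Real.log (1 + z) ≤ X ∧ X ≤ Real.log (1 + z) := by
  subst hW
  have hpos : 0 < 1 + X * exp X := by positivity
  constructor
  · have hlog := (log_le_iff_le_exp hpos).2 (one_add_mul_exp_le_exp_div hX)
    calc 0.6321 * log (1 + X * exp X) ≤ 0.6321 * (X / 0.6321) := by gcongr
      _ = X := by field_simp
  · exact (le_log_iff_exp_le hpos).2 (exp_le_one_add_mul_exp X)

theorem lambertW_bounds (z X : ℝ) (hz : 0 ≤ z) (hX : 0 ≤ X)
    (hW : X * Real.exp X = z) :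
    0.6321 * Real.log (1 + z) ≤ X ∧ X ≤ Real.log (1 + z) :=
  lambertW_bounds_general z X hX hW
end

section
/- Fix positive integers B ≤ L−1 and t with t ≥ (L−1)·2^{L−1} (so bracket B has been collecting budget from phase B through the current, unfinished phase L). If t > 16 and L ≤ 1 + log₂(1 + ln(2)·t), then the accumulated budget T_{B,t} = ∑_{i=B}^{L−1} 2^{i−1}(i+1)/i + (t − 2^{L−1}(L−1))/L satisfies T_{B,t} > t/(4·ln t). -/
/-!
The finished phases contribute at least the budget of the last one, 2^{L-2}, and together with
the share (t - 2^{L-1}(L-1))/L of the current phase this is at least t/(2L), because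
t ≥ 2^{L-1}(L-1). On the other hand 1 + ln 2 · t ≤ t, so L ≤ 1 + log₂ t, and
1 + x / ln 2 < 2x as soon as x > 2 (using ln 2 > 2/3); for x = ln t this holds since t > 16.
Hence 2L < 4 ln t.
-/

open Finset Real

noncomputable def phaseBudget (i : ℕ) : ℝ := 2 ^ (i - 1) * ((i : ℝ) + 1) / i

lemma phaseBudget_nonneg (i : ℕ) : 0 ≤ phaseBudget i := by
  unfold phaseBudget; positivity

lemma two_pow_div_two_le_phaseBudget {i : ℕ} (hi : 1 ≤ i) : (2 : ℝ) ^ i / 2 ≤ phaseBudget i := by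
  have hi' : (1 : ℝ) ≤ i := by exact_mod_cast hi
  obtain ⟨j, rfl⟩ := Nat.exists_eq_add_of_le' hi
  rw [phaseBudget, le_div_iff₀ (by linarith), Nat.add_sub_cancel, pow_succ]
  nlinarith [pow_pos (two_pos : (0 : ℝ) < 2) j]

lemma two_pow_div_two_le_sum_phaseBudget {B m : ℕ} (hm : 1 ≤ m) (hBm : B ≤ m) :
    (2 : ℝ) ^ m / 2 ≤ ∑ i ∈ Icc B m, phaseBudget i :=
  (two_pow_div_two_le_phaseBudget hm).trans <|
    single_le_sum (fun i _ => phaseBudget_nonneg i) (mem_Icc.mpr ⟨hBm, le_rfl⟩)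

lemma div_two_mul_le_half_add_div {t q L : ℝ} (hL : 0 < L) (hq : 0 ≤ q) (ht : q * (L - 1) ≤ t) :
    t / (2 * L) ≤ q / 2 + (t - q * (L - 1)) / L := by
  rw [div_add_div _ _ two_ne_zero hL.ne', div_le_div_iff₀ (by positivity) (by positivity)]
  nlinarith

lemma two_lt_log_of_sixteen_lt {t : ℝ} (ht : 16 < t) : 2 < log t := by
  have h16 : log 16 = 4 * log 2 := by
    rw [show (16 : ℝ) = 2 ^ 4 by norm_num, log_pow]; norm_num
  have := log_lt_log (by norm_num) ht
  linarith [log_two_gt_d9]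

lemma logb_two_one_add_log_two_mul_le {t : ℝ} (ht : 4 ≤ t) :
    logb 2 (1 + log 2 * t) ≤ logb 2 t := by
  exact logb_le_logb_of_le one_lt_two (by positivity) (by nlinarith [log_two_lt_d9])

lemma one_add_div_log_two_lt {x : ℝ} (hx : 2 < x) : 1 + x / log 2 < 2 * x := by
  have hlog2 := log_two_gt_d9
  have : x / log 2 < 3 * x / 2 := by
    rw [div_lt_div_iff₀ (by linarith) two_pos]; nlinarith
  linarith

lemma lt_two_mul_log_of_le_one_add_logb {L t : ℝ} (ht : 16 < t)
    (hL : L ≤ 1 + logb 2 (1 + log 2 * t)) : L < 2 * log t := by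
  have hlogb : logb 2 (1 + log 2 * t) ≤ log t / log 2 :=
    logb_two_one_add_log_two_mul_le (by linarith)
  linarith [one_add_div_log_two_lt (two_lt_log_of_sixteen_lt ht)]

theorem bracket_budget_lower_bound_general (B L t : ℕ) (hBL : B ≤ L - 1)
    (hL : 2 ≤ L) (ht : (L - 1) * 2 ^ (L - 1) ≤ t) (ht16 : 16 < t)
    (hLt : (L : ℝ) ≤ 1 + Real.logb 2 (1 + Real.log 2 * t)) :
    (∑ i ∈ Finset.Icc B (L - 1), (2 : ℝ) ^ (i - 1) * ((i : ℝ) + 1) / i) +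
      ((t : ℝ) - (2 : ℝ) ^ (L - 1) * ((L : ℝ) - 1)) / L > (t : ℝ) / (4 * Real.log t) := by
  have ht16R : (16 : ℝ) < t := by exact_mod_cast ht16
  have htR : (2 : ℝ) ^ (L - 1) * (L - 1) ≤ t := by
    have : (((L - 1) * 2 ^ (L - 1) : ℕ) : ℝ) ≤ t := by exact_mod_cast ht
    push_cast [Nat.cast_sub (by omega : 1 ≤ L)] at this
    linarith
  have hsum := two_pow_div_two_le_sum_phaseBudget (by omega : 1 ≤ L - 1) hBL
  have hmid := div_two_mul_le_half_add_div (by positivity) (by positivity) htR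
  have hlog := lt_two_mul_log_of_le_one_add_logb ht16R hLt
  calc (t : ℝ) / (4 * log t) < t / (2 * L) :=
        div_lt_div_of_pos_left (by linarith) (by positivity) (by linarith)
    _ ≤ _ := by unfold phaseBudget at hsum; linarith

theorem bracket_budget_lower_bound (B L t : ℕ) (hB : 1 ≤ B) (hBL : B ≤ L - 1)
    (hL : 2 ≤ L) (ht : (L - 1) * 2 ^ (L - 1) ≤ t) (ht16 : 16 < t)
    (hLt : (L : ℝ) ≤ 1 + Real.logb 2 (1 + Real.log 2 * t)) :
    (∑ i ∈ Finset.Icc B (L - 1), (2 : ℝ) ^ (i - 1) * ((i : ℝ) + 1) / i) +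
      ((t : ℝ) - (2 : ℝ) ^ (L - 1) * ((L : ℝ) - 1)) / L > (t : ℝ) / (4 * Real.log t) :=
  bracket_budget_lower_bound_general B L t hBL hL ht ht16 hLt
end

section
/- Consider nonnegative integers n, m′, s, k with k ≤ min(m′, s) ≤ n, a set of n arms partitioned into a 'good' set G of size m′ and its complement, and empirical mean estimates μ̂_i for each arm. Suppose (i) at least k+1 arms i in the top-m′ set satisfy μ̂_i > μ_i − ε/2, and (ii) at least |Bad| − s + k + 1 arms i in the bad set Bad (arms with μ_i < μ_{m′} − ε) satisfy μ̂_i < μ_i + ε/2, where every arm in the top-m′ set has true mean at least μ_{m′}. Then the set of s arms with the largest empirical means contains strictly more than k arms whose true mean is at least μ_{m′} − ε. -/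
/-!
If `S` had at most `k` arms with `μm' - ε ≤ μ i`, then one of the `k + 1` top arms with
`μhat i > μ i - ε / 2`, all of which are such arms, lies outside `S`. Also `S` would contain at
least `s - k` bad arms, while at most `s - k - 1` bad arms have `μhat j ≥ μ j + ε / 2`, so some bad
`j ∈ S` has `μhat j < μ j + ε / 2`. Then `μhat j < μm' - ε / 2 ≤ μ i - ε / 2 < μhat i`, although
`S` keeps the arms with the largest `μhat`.
-/

open Finset

namespace Finset

variable {α : Type*}

theorem exists_mem_notMem_of_card_filter_lt {A S : Finset α} {p : α → Prop} [DecidablePred p]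
    (hA : ∀ i ∈ A, p i) (h : #(S.filter p) < #A) : ∃ i ∈ A, i ∉ S := by
  obtain ⟨i, hiA, hiS⟩ := exists_mem_notMem_of_card_lt_card h
  exact ⟨i, hiA, fun hS => hiS (mem_filter.2 ⟨hS, hA i hiA⟩)⟩

theorem exists_mem_filter_of_card_filter_not_lt [Fintype α] {S : Finset α} {p r : α → Prop}
    [DecidablePred p] [DecidablePred r]
    (h : #((univ.filter p).filter (fun j => ¬ r j)) < #(S.filter p)) : ∃ j ∈ S, p j ∧ r j := by
  obtain ⟨j, hjS, hj⟩ := exists_mem_notMem_of_card_lt_card h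
  rw [mem_filter] at hjS
  exact ⟨j, hjS.1, hjS.2, by_contra fun hr => hj (by simp [hjS.2, hr])⟩

end Finset

theorem uniform_sampling_good_arms_in_output_general
    (n s k : ℕ)
    (μ μhat : Fin n → ℝ) (ε : ℝ) (hε : 0 < ε) (μm' : ℝ)
    (Top : Finset (Fin n))
    (hTopMean : ∀ i ∈ Top, μm' ≤ μ i)
    (S : Finset (Fin n)) (hSCard : S.card = s)
    (hSMax : ∀ i ∈ S, ∀ j ∉ S, μhat j ≤ μhat i)
    (h1 : k + 1 ≤ (Top.filter (fun i => μhat i > μ i - ε / 2)).card)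
    (h2 : ((((Finset.univ.filter (fun i => μ i < μm' - ε)).filter
              (fun i => μhat i < μ i + ε / 2)).card : ℤ) ≥
            ((Finset.univ.filter (fun i => μ i < μm' - ε)).card : ℤ) - s + k + 1)) :
    k < (S.filter (fun i => μm' - ε ≤ μ i)).card := by
  by_contra! hfew
  obtain ⟨i, hiA, hiS⟩ : ∃ i ∈ Top.filter (fun i => μhat i > μ i - ε / 2), i ∉ S :=
    exists_mem_notMem_of_card_filter_lt (p := fun i => μm' - ε ≤ μ i)
      (fun i hi => (hTopMean i (mem_filter.1 hi).1).trans' (by linarith)) (by omega)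
  obtain ⟨j, hjS, hjBad, hjhat⟩ : ∃ j ∈ S, μ j < μm' - ε ∧ μhat j < μ j + ε / 2 := by
    apply exists_mem_filter_of_card_filter_not_lt
    have hBad := card_filter_add_card_filter_not (s := univ.filter (fun i => μ i < μm' - ε))
      (fun i => μhat i < μ i + ε / 2)
    have hS := card_filter_add_card_filter_not (s := S) (fun i => μ i < μm' - ε)
    simp only [not_lt] at hS
    omega
  have hi := mem_filter.1 hiA
  linarith [hSMax j hjS i hiS, hTopMean i hi.1]

/-- Deterministic combinatorial core (Step 1 of Proposition 1).
`Top` is the set of the `m'` arms with the largest true means, `μm'` is the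
`m'`-th largest true mean, `Bad` is the set of arms with true mean below
`μm' - ε`, and `S` is the set of `s` arms with the largest empirical means. -/
theorem uniform_sampling_good_arms_in_output
    (n m' s k : ℕ) (hk : k ≤ min m' s) (hm'n : m' ≤ n) (hsn : s ≤ n)
    (μ μhat : Fin n → ℝ) (ε : ℝ) (hε : 0 < ε) (μm' : ℝ)
    (Top : Finset (Fin n)) (hTopCard : Top.card = m')
    (hTopMean : ∀ i ∈ Top, μm' ≤ μ i)
    (hTopMax : ∀ i ∈ Top, ∀ j ∉ Top, μ j ≤ μ i)
    (S : Finset (Fin n)) (hSCard : S.card = s)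
    (hSMax : ∀ i ∈ S, ∀ j ∉ S, μhat j ≤ μhat i)
    (h1 : k + 1 ≤ (Top.filter (fun i => μhat i > μ i - ε / 2)).card)
    (h2 : ((((Finset.univ.filter (fun i => μ i < μm' - ε)).filter
              (fun i => μhat i < μ i + ε / 2)).card : ℤ) ≥
            ((Finset.univ.filter (fun i => μ i < μm' - ε)).card : ℤ) - s + k + 1)) :
    k < (S.filter (fun i => μm' - ε ≤ μ i)).card :=
  uniform_sampling_good_arms_in_output_general n s k μ μhat ε hε μm' Top hTopMean S hSCard hSMax h1
    h2
end
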